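/- Let R be a ring in which every idempotent is central and which is a principal ideal ring (every right ideal and every left ideal of R is generated by a single element). Then R is endoartinian (both left and right endoartinian) if and only if there exist n ∈ ℕ and rings R_1, …, R_n, each of which is an artinian uniserial ring, such that R is isomorphic as a ring to the product R_1 × ⋯ × R_n. -/

import Mathlib

/-!
Since every one-sided ideal of a principal ideal ring is the image of a multiplication map,
an endoartinian principal ideal ring is artinian on both sides. Splitting `1` along central
idempotents, which terminates by the descending chain condition on the ideals they generate,
writes `R` as a finite product of corner rings without nontrivial idempotents. In such a corner
`T`, Fitting's lemma makes every element a unit or nilpotent, so `T` is local and its maximal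
left ideal is generated by a nilpotent `m`; then every element is a unit times a power of `m`,
and the left ideals form the chain `T m ^ k`. The same holds on the right, via `Tᵐᵒᵖ`.
Conversely, finite products of artinian rings are artinian, and artinian modules are
endoartinian.
-/

/-- A module `M` over a ring `S` is *endoartinian* if every descending chain of images of
module endomorphisms of `M` stabilizes.  (A right `R`-module is treated as a module over
`Rᵐᵒᵖ`; a left `R`-module is a module over `R` itself.) -/
def IsEndoartinian (S M : Type*) [Ring S] [AddCommGroup M] [Module S M] : Prop :=
  ∀ f : ℕ → M →ₗ[S] M,
    (∀ n, LinearMap.range (f (n + 1)) ≤ LinearMap.range (f n)) →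
    ∃ n, ∀ k, n ≤ k → LinearMap.range (f k) = LinearMap.range (f n)

open MulOpposite Submodule

section Endoartinian

variable {S M N : Type*} [Ring S] [AddCommGroup M] [AddCommGroup N] [Module S M] [Module S N]

theorem IsEndoartinian.of_isArtinian [IsArtinian S M] : IsEndoartinian S M := by
  intro f hf
  obtain ⟨n, hn⟩ := IsArtinian.monotone_stabilizes
    ⟨fun n => OrderDual.toDual (LinearMap.range (f n)), (antitone_nat_of_succ_le hf).dual_right⟩
  exact ⟨n, fun k hk => (hn k hk).symm⟩

theorem IsEndoartinian.of_linearEquiv (e : M ≃ₗ[S] N) (h : IsEndoartinian S M) :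
    IsEndoartinian S N := by
  intro f hf
  let o := Submodule.orderIsoMapComap e.symm
  have hrange : ∀ n, LinearMap.range (e.symm.toLinearMap ∘ₗ f n ∘ₗ e.toLinearMap) =
      o (LinearMap.range (f n)) := fun n => by
    rw [LinearMap.range_comp, LinearMap.range_comp_of_range_eq_top _ e.range]
    rfl
  obtain ⟨n, hn⟩ := h (fun n => e.symm.toLinearMap ∘ₗ f n ∘ₗ e.toLinearMap) fun n => by
    rw [hrange, hrange]
    exact o.monotone (hf n)
  refine ⟨n, fun k hk => o.injective ?_⟩
  rw [← hrange, ← hrange, hn k hk]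

theorem IsEndoartinian.isArtinian [IsPrincipalIdealRing S] (h : IsEndoartinian S S) :
    IsArtinian S S := by
  rw [← monotone_stabilizes_iff_artinian]
  intro I
  let a n := IsPrincipal.generator (OrderDual.ofDual (I n))
  have hrange : ∀ n, LinearMap.range (LinearMap.toSpanSingleton S S (a n)) =
      OrderDual.ofDual (I n) := fun n => by
    rw [← LinearMap.span_singleton_eq_range, IsPrincipal.span_singleton_generator]
  obtain ⟨n, hn⟩ := h (fun n => LinearMap.toSpanSingleton S S (a n)) fun n => by
    rw [hrange, hrange]
    exact I.monotone n.le_succ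
  refine ⟨n, fun m hm => OrderDual.ofDual.injective ?_⟩
  rw [← hrange, ← hrange, hn m hm]

end Endoartinian

section Opposite

variable {T : Type*} [Ring T]

theorem isArtinian_op_iff : IsArtinian Tᵐᵒᵖ T ↔ IsArtinianRing Tᵐᵒᵖ :=
  (opLinearEquiv Tᵐᵒᵖ).isArtinian_iff

theorem isPrincipalIdealRing_op (h : ∀ I : Submodule Tᵐᵒᵖ T, I.IsPrincipal) :
    IsPrincipalIdealRing Tᵐᵒᵖ :=
  ⟨fun I => IsPrincipal.of_comap (hI := h _) _ (opLinearEquiv Tᵐᵒᵖ).surjective I⟩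

end Opposite

def HasTrivialIdempotents (T : Type*) [Ring T] : Prop :=
  ∀ e : T, IsIdempotentElem e → e = 0 ∨ e = 1

section TrivialIdempotents

variable {T : Type*} [Ring T]

theorem HasTrivialIdempotents.of_ringEquiv {U : Type*} [Ring U] (f : T ≃+* U)
    (h : HasTrivialIdempotents T) : HasTrivialIdempotents U := by
  intro x hx
  obtain ⟨y, rfl⟩ := f.surjective x
  exact (h y (by simpa using hx.map f.symm)).imp (fun h0 => by rw [h0, map_zero])
    (fun h1 => by rw [h1, map_one])

theorem HasTrivialIdempotents.op (h : HasTrivialIdempotents T) : HasTrivialIdempotents Tᵐᵒᵖ :=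
  fun e he => (h e.unop (congrArg unop he)).imp (congrArg MulOpposite.op)
    (congrArg MulOpposite.op)

theorem Submodule.eq_bot_or_eq_bot_of_isCompl {M : Type*} [AddCommGroup M] [Module T M]
    (h : HasTrivialIdempotents (Module.End T M)) {p q : Submodule T M} (hpq : IsCompl p q) :
    p = ⊥ ∨ q = ⊥ :=
  (h _ (isIdempotentElem_projection hpq)).imp
    (fun h0 => by rw [← range_projection hpq, h0, LinearMap.range_zero])
    (fun h1 => by rw [← ker_projection hpq, h1, Module.End.one_eq_id, LinearMap.ker_id])

/-- Fitting's lemma for right multiplication by `a`. -/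
theorem HasTrivialIdempotents.isUnit_or_isNilpotent [IsArtinianRing T] [IsNoetherianRing T]
    (h : HasTrivialIdempotents T) (a : T) : IsUnit a ∨ IsNilpotent a := by
  let φ := RingEquiv.moduleEndSelf T
  obtain ⟨n, hcompl, hn⟩ := ((φ (MulOpposite.op a)).eventually_isCompl_ker_pow_range_pow.and
    (Filter.eventually_ne_atTop 0)).exists
  rw [← map_pow, ← op_pow] at hcompl
  rcases eq_bot_or_eq_bot_of_isCompl (h.op.of_ringEquiv φ) hcompl with hker | hrange
  · left
    have hunit : IsUnit (φ (MulOpposite.op (a ^ n))) := (Module.End.isUnit_iff _).2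
      (IsArtinian.bijective_of_injective_endomorphism _ (LinearMap.ker_eq_bot.1 hker))
    rwa [isUnit_map_iff, isUnit_op, isUnit_pow_iff hn] at hunit
  · right
    refine ⟨n, op_injective ?_⟩
    rw [LinearMap.range_eq_bot, map_eq_zero_iff φ φ.injective] at hrange
    rw [hrange, op_zero]

theorem Submodule.le_total_of_span_singleton {M : Type*} [AddCommGroup M] [Module T M]
    (h : ∀ x y : M, span T {x} ≤ span T {y} ∨ span T {y} ≤ span T {x})
    (I J : Submodule T M) : I ≤ J ∨ J ≤ I := by
  by_contra! hIJ
  obtain ⟨x, hxI, hxJ⟩ := SetLike.not_le_iff_exists.1 hIJ.1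
  obtain ⟨y, hyJ, hyI⟩ := SetLike.not_le_iff_exists.1 hIJ.2
  rcases h x y with hxy | hyx
  · exact hxJ (hxy.trans ((span_singleton_le_iff_mem y J).2 hyJ) (mem_span_singleton_self x))
  · exact hyI (hyx.trans ((span_singleton_le_iff_mem x I).2 hxI) (mem_span_singleton_self y))

theorem exists_span_singleton_eq_pow {m : T} {N : ℕ} (hN : m ^ N = 0)
    (hm : ∀ x : T, ¬IsUnit x → x ∈ span T {m}) (x : T) :
    ∃ k, span T {x} = span T {m ^ k} := by
  -- peel factors `m` off `t` until it is a unit; `m ^ N = 0` bounds the number of steps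
  suffices ∀ d n (t : T), n + d = N → ∃ k, span T {t * m ^ n} = span T {m ^ k} by
    simpa using this N 0 x (zero_add N)
  intro d
  induction d with
  | zero => exact fun n t h => ⟨n, by rw [← add_zero n, h, hN, mul_zero]⟩
  | succ d ih =>
    intro n t h
    by_cases ht : IsUnit t
    · exact ⟨n, span_singleton_smul_eq ht _⟩
    · obtain ⟨s, rfl⟩ := mem_span_singleton.1 (hm t ht)
      simpa only [smul_eq_mul, mul_assoc, ← pow_succ'] using ih (n + 1) s (by omega)

theorem HasTrivialIdempotents.le_total [IsArtinianRing T] [IsPrincipalIdealRing T]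
    (h : HasTrivialIdempotents T) (I J : Submodule T T) : I ≤ J ∨ J ≤ I := by
  rcases subsingleton_or_nontrivial T with _ | _
  · exact Or.inl fun x _ => Subsingleton.elim x 0 ▸ J.zero_mem
  have hun := h.isUnit_or_isNilpotent
  have := IsLocalRing.of_isUnit_or_isUnit_one_sub_self fun a =>
    (hun a).imp_right IsNilpotent.isUnit_one_sub
  let nonunitsIdeal : Submodule T T :=
    { IsLocalRing.nonunitsAddSubmonoid T with
      smul_mem' := fun _ _ hx hrx => hx (isUnit_of_mul_isUnit_right hrx) }
  obtain ⟨m, hm⟩ := (IsPrincipalIdealRing.principal nonunitsIdeal).principal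
  obtain ⟨N, hN⟩ := (hun m).resolve_left
    (show m ∈ nonunitsIdeal from hm ▸ mem_span_singleton_self m)
  have hpow : ∀ x, ∃ k, span T {x} = span T {m ^ k} :=
    exists_span_singleton_eq_pow hN fun x hx => hm ▸ (hx : x ∈ nonunitsIdeal)
  have hanti : ∀ a b, a ≤ b → span T {m ^ b} ≤ span T {m ^ a} := fun a b hab =>
    (span_singleton_le_iff_mem _ _).2 (mem_span_singleton.2
      ⟨m ^ (b - a), by rw [smul_eq_mul, ← pow_add, Nat.sub_add_cancel hab]⟩)
  refine le_total_of_span_singleton (fun x y => ?_) I J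
  obtain ⟨a, ha⟩ := hpow x
  obtain ⟨b, hb⟩ := hpow y
  rw [ha, hb]
  exact (_root_.le_total b a).imp (hanti b a) (hanti a b)

end TrivialIdempotents

section CentralIdempotents

variable {R : Type*} [Ring R]

theorem span_singleton_lt_of_mul_eq {e g : R} (hg : IsIdempotentElem g) (hge : g * e = g)
    (heg : e * g = g) (hne : g ≠ e) : span R {g} < span R {e} := by
  refine lt_of_le_not_ge ((span_singleton_le_iff_mem _ _).2 (mem_span_singleton.2 ⟨g, hge⟩))
    fun hle => hne ?_
  obtain ⟨t, rfl⟩ := mem_span_singleton.1 ((span_singleton_le_iff_mem _ _).1 hle)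
  simpa [smul_eq_mul, mul_assoc, hg.eq] using heg.symm

theorem exists_list_primitive_sum_eq [IsArtinianRing R]
    (hc : ∀ e : R, IsIdempotentElem e → ∀ r, e * r = r * e) (e : R) (he : IsIdempotentElem e) :
    ∃ l : List R, (∀ x ∈ l, IsIdempotentElem x ∧ x * e = x ∧
        ∀ g, IsIdempotentElem g → x * g = g → g = 0 ∨ g = x) ∧
      l.Pairwise (fun x y => x * y = 0) ∧ l.sum = e := by
  induction e using (InvImage.wf (fun e : R => span R {e}) wellFounded_lt).induction with
  | _ e ih =>
    by_cases hprim : ∀ g, IsIdempotentElem g → e * g = g → g = 0 ∨ g = e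
    · exact ⟨[e], by simpa using ⟨he, he.eq, hprim⟩, List.pairwise_singleton _ _,
        List.sum_singleton⟩
    push Not at hprim
    obtain ⟨g, hg, heg, hg0, hge⟩ := hprim
    have hge' : g * e = g := (hc g hg e).trans heg
    have hf : IsIdempotentElem (e - g) := hg.sub he hge' heg
    have hfe : (e - g) * e = e - g := by rw [sub_mul, he.eq, hge']
    have hef : e * (e - g) = e - g := by rw [mul_sub, he.eq, heg]
    have hgf : g * (e - g) = 0 := by rw [mul_sub, hge', hg.eq, sub_self]
    obtain ⟨l₁, h₁, p₁, s₁⟩ := ih g (span_singleton_lt_of_mul_eq hg hge' heg hge) hg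
    obtain ⟨l₂, h₂, p₂, s₂⟩ :=
      ih (e - g) (span_singleton_lt_of_mul_eq hf hfe hef fun h => hg0 (sub_eq_self.1 h)) hf
    refine ⟨l₁ ++ l₂, ?_, List.pairwise_append.2 ⟨p₁, p₂, fun x hx y hy => ?_⟩,
      by rw [List.sum_append, s₁, s₂, add_sub_cancel]⟩
    · simp only [List.mem_append]
      rintro x (hx | hx)
      · obtain ⟨hxi, hxg, hxp⟩ := h₁ x hx
        exact ⟨hxi, by rw [← hxg, mul_assoc, hge'], hxp⟩
      · obtain ⟨hxi, hxf, hxp⟩ := h₂ x hx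
        exact ⟨hxi, by rw [← hxf, mul_assoc, hfe], hxp⟩
    · calc x * y = x * g * ((e - g) * y) := by rw [hc _ hf y, (h₁ x hx).2.1, (h₂ y hy).2.1]
        _ = 0 := by rw [mul_assoc, ← mul_assoc g, hgf, zero_mul, mul_zero]

theorem hasTrivialIdempotents_corner {v : R} (hv : IsIdempotentElem v)
    (hprim : ∀ g, IsIdempotentElem g → v * g = g → g = 0 ∨ g = v) :
    HasTrivialIdempotents hv.Corner := fun e he =>
  (hprim e.1 (congrArg Subtype.val he) ((Subsemigroup.mem_corner_iff hv).1 e.2).1).imp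
    Subtype.ext Subtype.ext

theorem exists_completeOrthogonalIdempotents_hasTrivialIdempotents_corner [IsArtinianRing R]
    (hc : ∀ e : R, IsIdempotentElem e → ∀ r, e * r = r * e) :
    ∃ (n : ℕ) (v : Fin n → R) (hv : CompleteOrthogonalIdempotents v),
      ∀ i, HasTrivialIdempotents (hv.idem i).Corner := by
  obtain ⟨l, hl, hpair, hsum⟩ := exists_list_primitive_sum_eq hc 1 .one
  have hidem : ∀ i : Fin l.length, IsIdempotentElem l[i.1] := fun i =>
    (hl _ (List.getElem_mem _)).1
  have hortho : Pairwise fun i j : Fin l.length => l[i.1] * l[j.1] = 0 := by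
    intro i j hij
    rcases lt_or_gt_of_ne (Fin.val_ne_of_ne hij) with h | h
    · exact List.pairwise_iff_getElem.1 hpair _ _ _ _ h
    · rw [hc _ (hidem i)]
      exact List.pairwise_iff_getElem.1 hpair _ _ _ _ h
  exact ⟨l.length, fun i => l[i.1], ⟨⟨hidem, hortho⟩, by rw [Fin.sum_univ_getElem, hsum]⟩,
    fun i => hasTrivialIdempotents_corner _ (hl _ (List.getElem_mem _)).2.2⟩

end CentralIdempotents

def IsArtinianUniserialRing (S : Type*) [Ring S] : Prop :=
  IsArtinian S S ∧ IsArtinian Sᵐᵒᵖ S ∧ (∀ I J : Submodule Sᵐᵒᵖ S, I ≤ J ∨ J ≤ I) ∧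
    ∀ I J : Submodule S S, I ≤ J ∨ J ≤ I

theorem isArtinianUniserialRing_of_surjective {R S : Type*} [Ring R] [Ring S] [IsArtinianRing R]
    [IsArtinianRing Rᵐᵒᵖ] [IsPrincipalIdealRing R] [IsPrincipalIdealRing Rᵐᵒᵖ] (f : R →+* S)
    (hf : Function.Surjective f) (hS : HasTrivialIdempotents S) :
    IsArtinianUniserialRing S := by
  have hfop : Function.Surjective (RingHom.op f) := op_surjective.comp (hf.comp unop_surjective)
  have := hf.isArtinianRing
  have := hfop.isArtinianRing
  have := IsPrincipalIdealRing.of_surjective f hf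
  have := IsPrincipalIdealRing.of_surjective _ hfop
  let o := Submodule.orderIsoMapComap (opLinearEquiv Sᵐᵒᵖ : S ≃ₗ[Sᵐᵒᵖ] Sᵐᵒᵖ)
  refine ⟨inferInstance, isArtinian_op_iff.2 inferInstance, fun I J => ?_, hS.le_total⟩
  exact (hS.op.le_total (o I) (o J)).imp o.le_iff_le.1 o.le_iff_le.1

/-- Let `R` be a ring in which every idempotent is central and which is a principal ideal
ring (every right ideal and every left ideal is generated by one element).  Then `R` is
endoartinian (left and right) iff `R` is isomorphic to a finite product of artinian
uniserial rings (rings that are left and right artinian whose right ideals and left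
ideals are each totally ordered by inclusion). -/
theorem isEndoartinian_iff_product_of_artinian_uniserial (R : Type) [Ring R]
    (hcentral : ∀ e : R, e * e = e → ∀ r : R, e * r = r * e)
    (hPIR_right : ∀ I : Submodule Rᵐᵒᵖ R, ∃ a : R, I = Submodule.span Rᵐᵒᵖ {a})
    (hPIR_left : ∀ I : Submodule R R, ∃ a : R, I = Submodule.span R {a}) :
    (IsEndoartinian R R ∧ IsEndoartinian Rᵐᵒᵖ R) ↔
      ∃ (n : ℕ) (S : Fin n → Type) (inst : (i : Fin n) → Ring (S i)),
        (∀ i, letI := inst i;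
          IsArtinian (S i) (S i) ∧ IsArtinian (S i)ᵐᵒᵖ (S i) ∧
          (∀ I J : Submodule (S i)ᵐᵒᵖ (S i), I ≤ J ∨ J ≤ I) ∧
          (∀ I J : Submodule (S i) (S i), I ≤ J ∨ J ≤ I)) ∧
        (letI := inst; Nonempty (R ≃+* ((i : Fin n) → S i))) := by
  constructor
  · rintro ⟨hEL, hER⟩
    have : IsPrincipalIdealRing R := ⟨fun I => ⟨hPIR_left I⟩⟩
    have : IsPrincipalIdealRing Rᵐᵒᵖ := isPrincipalIdealRing_op fun I => ⟨hPIR_right I⟩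
    have : IsArtinianRing R := hEL.isArtinian
    have : IsArtinianRing Rᵐᵒᵖ := (hER.of_linearEquiv (opLinearEquiv Rᵐᵒᵖ)).isArtinian
    obtain ⟨n, v, hv, hcorner⟩ :=
      exists_completeOrthogonalIdempotents_hasTrivialIdempotents_corner hcentral
    let ψ := hv.ringEquivOfIsMulCentral fun i =>
      Semigroup.mem_center_iff.2 fun r => (hcentral _ (hv.idem i) r).symm
    refine ⟨n, fun i => (hv.idem i).Corner, fun i => inferInstance, fun i => ?_, ⟨ψ⟩⟩
    exact isArtinianUniserialRing_of_surjective ((Pi.evalRingHom _ i).comp ψ.toRingHom)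
      ((Function.surjective_eval i).comp ψ.surjective) (hcorner i)
  · rintro ⟨n, S, inst, hS, ⟨ψ⟩⟩
    have := fun i => (hS i).1
    have := fun i => isArtinian_op_iff.1 (hS i).2.1
    have : IsArtinianRing R := ψ.symm.isArtinianRing
    have : IsArtinianRing Rᵐᵒᵖ :=
      ((RingEquiv.op ψ).trans (RingEquiv.piMulOpposite S)).symm.isArtinianRing
    have : IsArtinian Rᵐᵒᵖ R := isArtinian_op_iff.2 inferInstance
    exact ⟨.of_isArtinian, .of_isArtinian⟩
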